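/- arXiv:2408.01132 — 3 statements merged into one kernel-verified Lean document; each statement's English description precedes it below -/
import Mathlib

section
/- Let Ω ⊆ ℝ² be a bounded domain with piecewise smooth Jordan boundary, let w be a C¹ weight function with w = 0 on ∂Ω, and let φ_{n,k} = √w · p_{n,k} where {p_{n,k}} is an orthonormal polynomial system for the weight w on Ω. Then the differentiation matrix 𝒳 with entries 𝒳_{(m,ℓ),(n,k)} = ∫_Ω ∂_x(√w p_{n,k}) · √w p_{m,ℓ} dx dy is skew-symmetric: 𝒳_{(m,ℓ),(n,k)} + 𝒳_{(n,k),(m,ℓ)} = 0. -/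
open MeasureTheory Real

/-- Let `Ω ⊆ ℝ²` be a bounded open domain such that Green's theorem holds on `Ω`
(encoded by the hypothesis `hGreen`: the integral over `Ω` of the `x`-partial
derivative of any `C¹` function vanishing on `∂Ω` is zero).  Let `w` be a
nonnegative `C¹` weight with `w = 0` on `∂Ω` and let `p, q` be smooth (e.g.
polynomial) functions.  Then the differentiation matrix entries
`𝒳_{(m,ℓ),(n,k)} = ∫_Ω ∂_x(√w p_{n,k}) · √w p_{m,ℓ}` are skew-symmetric:
`𝒳_{(m,ℓ),(n,k)} + 𝒳_{(n,k),(m,ℓ)} = 0`. -/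
theorem diff_matrix_skew_symmetric (Ω : Set (ℝ × ℝ)) (hopen : IsOpen Ω)
    (hbdd : Bornology.IsBounded Ω)
    (w p q : ℝ × ℝ → ℝ)
    (hw : ContDiff ℝ 1 w) (hwnn : ∀ z, 0 ≤ w z)
    (hw0 : ∀ z ∈ frontier Ω, w z = 0)
    (hp : ContDiff ℝ 1 p) (hq : ContDiff ℝ 1 q)
    (hGreen : ∀ g : ℝ × ℝ → ℝ, ContDiff ℝ 1 g → (∀ z ∈ frontier Ω, g z = 0) →
      (∫ z in Ω, fderiv ℝ g z (1, 0)) = 0) :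
    (∫ z in Ω, fderiv ℝ (fun z => Real.sqrt (w z) * p z) z (1, 0) *
        (Real.sqrt (w z) * q z)) +
      (∫ z in Ω, fderiv ℝ (fun z => Real.sqrt (w z) * q z) z (1, 0) *
        (Real.sqrt (w z) * p z)) = 0 := by
  set G : ℝ × ℝ → ℝ := fun z => w z * (p z * q z) with hGdef
  set A : ℝ × ℝ → ℝ := fun z =>
    fderiv ℝ (fun z => Real.sqrt (w z) * p z) z (1, 0) * (Real.sqrt (w z) * q z) with hAdef
  set B : ℝ × ℝ → ℝ := fun z =>
    fderiv ℝ (fun z => Real.sqrt (w z) * q z) z (1, 0) * (Real.sqrt (w z) * p z) with hBdef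
  have hG : ContDiff ℝ 1 G := hw.mul (hp.mul hq)
  -- Pointwise identity: A z + B z = ∂ₓ G z for every z
  have hpt : ∀ z, A z + B z = fderiv ℝ G z (1, 0) := by
    intro z
    rcases lt_or_eq_of_le (hwnn z) with hz | hz
    · -- w z > 0 :  √w differentiable, product rule
      have hs : DifferentiableAt ℝ (fun z => Real.sqrt (w z)) z :=
        (hw.differentiable one_ne_zero z).sqrt (ne_of_gt hz)
      have hf : DifferentiableAt ℝ (fun z => Real.sqrt (w z) * p z) z :=
        hs.mul (hp.differentiable one_ne_zero z)
      have hg : DifferentiableAt ℝ (fun z => Real.sqrt (w z) * q z) z :=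
        hs.mul (hq.differentiable one_ne_zero z)
      have hGeq : G = fun z => (Real.sqrt (w z) * p z) * (Real.sqrt (w z) * q z) := by
        funext z
        simp only [hGdef]
        conv_lhs => rw [← Real.mul_self_sqrt (hwnn z)]
        ring
      rw [hGeq, fderiv_fun_mul hf hg]
      simp only [hAdef, hBdef, ContinuousLinearMap.add_apply, ContinuousLinearMap.smul_apply,
        smul_eq_mul]
      ring
    · -- w z = 0 : both sides vanish
      have hz' : w z = 0 := hz.symm
      have hs0 : Real.sqrt (w z) = 0 := by rw [hz', Real.sqrt_zero]
      have hA0 : A z = 0 := by simp [hAdef, hs0]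
      have hB0 : B z = 0 := by simp [hBdef, hs0]
      have hmin : IsLocalMin w z := Filter.Eventually.of_forall fun x => hz' ▸ hwnn x
      have hdw : fderiv ℝ w z = 0 := hmin.fderiv_eq_zero
      have : fderiv ℝ G z = 0 := by
        rw [hGdef]
        rw [fderiv_fun_mul (hw.differentiable one_ne_zero z)
          ((hp.differentiable one_ne_zero z).fun_mul (hq.differentiable one_ne_zero z))]
        rw [hz', hdw]
        simp
      rw [hA0, hB0, this]
      simp
  -- ∂ₓ G is continuous, hence integrable on the bounded set Ω
  have hCcont : Continuous (fun z => fderiv ℝ G z (1, 0)) :=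
    (hG.continuous_fderiv one_ne_zero).clm_apply continuous_const
  have hCint : IntegrableOn (fun z => fderiv ℝ G z (1, 0)) Ω volume :=
    (hCcont.continuousOn.integrableOn_compact hbdd.isCompact_closure).mono_set subset_closure
  -- Green's theorem for G
  have hGzero : (∫ z in Ω, fderiv ℝ G z (1, 0)) = 0 := by
    refine hGreen G hG fun z hz => ?_
    simp [hGdef, hw0 z hz]
  by_cases hA : IntegrableOn A Ω volume
  · have hB : IntegrableOn B Ω volume := by
      refine IntegrableOn.congr_fun (hCint.sub hA) (fun z _ => ?_) hopen.measurableSet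
      have := hpt z
      simp only [Pi.sub_apply]
      linarith
    calc (∫ z in Ω, A z) + (∫ z in Ω, B z) = ∫ z in Ω, (A z + B z) :=
          (integral_add hA hB).symm
      _ = ∫ z in Ω, fderiv ℝ G z (1, 0) := by
          exact setIntegral_congr_fun hopen.measurableSet fun z _ => hpt z
      _ = 0 := hGzero
  · have hB : ¬ IntegrableOn B Ω volume := by
      intro hB
      exact hA <| IntegrableOn.congr_fun (hCint.sub hB) (fun z _ => by
        have := hpt z; simp only [Pi.sub_apply]; linarith) hopen.measurableSet
    rw [integral_undef hA, integral_undef hB, add_zero]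
end

section
/- For α > 0, β, γ > -1 and m ≥ n ≥ k ≥ 0, the integral I^{α,β,γ}_{(m-k,k),(n-k,k)} = ∫₀¹ (1-x)^{2k+β+γ+1} x^{α-1} P_{m-k}^{(β+γ+2k+1,α)}(2x-1) P_{n-k}^{(β+γ+2k+1,α)}(2x-1) dx equals (-1)^{n+m} ((α+1)_{n-k}/(n-k)!) · Γ(β+γ+m+k+2)Γ(α)/Γ(α+β+γ+m+k+2). -/
open MeasureTheory Real
open intervalIntegral Finset

/-- The Jacobi polynomial `P_n^{(a,b)}(x)`. -/
noncomputable def jacobiP (n : ℕ) (a b x : ℝ) : ℝ :=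
  (Real.Gamma (a + n + 1) / (n.factorial * Real.Gamma (a + b + n + 1))) *
    ∑ m ∈ Finset.range (n + 1),
      (n.choose m : ℝ) * Real.Gamma (a + b + n + m + 1) / Real.Gamma (a + m + 1) *
        ((x - 1) / 2) ^ m


lemma realBeta_integrable {p q : ℝ} (hp : 0 < p) (hq : 0 < q) :
    IntervalIntegrable (fun x : ℝ => (1 - x) ^ (p - 1) * x ^ (q - 1)) volume 0 1 := by
  have hc := Complex.betaIntegral_convergent (u := (q : ℂ)) (v := (p : ℂ)) (by simpa) (by simpa)
  rw [intervalIntegrable_iff_integrableOn_Ioc_of_le zero_le_one]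
  have : IntegrableOn (fun x : ℝ => ((x : ℂ) ^ ((q : ℂ) - 1) * ((1 : ℂ) - x) ^ ((p : ℂ) - 1)).re)
      (Set.Ioc (0:ℝ) 1) volume := by
    rw [intervalIntegrable_iff_integrableOn_Ioc_of_le zero_le_one] at hc
    exact hc.re
  refine this.congr_fun (fun x hx => ?_) measurableSet_Ioc
  have hx0 : (0:ℝ) ≤ x := le_of_lt hx.1
  have hx1 : (0:ℝ) ≤ 1 - x := by linarith [hx.2]
  beta_reduce
  rw [show ((q:ℂ) - 1) = ((q - 1 : ℝ) : ℂ) by push_cast; ring,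
      show ((p:ℂ) - 1) = ((p - 1 : ℝ) : ℂ) by push_cast; ring,
      show ((1:ℂ) - (x:ℂ)) = ((1 - x : ℝ) : ℂ) by push_cast; ring,
      ← Complex.ofReal_cpow hx0, ← Complex.ofReal_cpow hx1, ← Complex.ofReal_mul]
  simp [mul_comm]

lemma realBeta_eval {p q : ℝ} (hp : 0 < p) (hq : 0 < q) :
    ∫ x in (0:ℝ)..1, (1 - x) ^ (p - 1) * x ^ (q - 1) =
      Real.Gamma q * Real.Gamma p / Real.Gamma (q + p) := by
  have hc := Complex.Gamma_mul_Gamma_eq_betaIntegral (s := (q : ℂ)) (t := (p : ℂ))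
    (by simpa) (by simpa)
  have hbeta : Complex.betaIntegral q p =
      ((∫ x in (0:ℝ)..1, (1 - x) ^ (p - 1) * x ^ (q - 1) : ℝ) : ℂ) := by
    rw [Complex.betaIntegral, ← intervalIntegral.integral_ofReal]
    refine intervalIntegral.integral_congr (fun x hx => ?_)
    rw [Set.uIcc_of_le zero_le_one] at hx
    have hx0 : (0:ℝ) ≤ x := hx.1
    have hx1 : (0:ℝ) ≤ 1 - x := by linarith [hx.2]
    rw [show ((q:ℂ) - 1) = ((q - 1 : ℝ) : ℂ) by push_cast; ring,
        show ((p:ℂ) - 1) = ((p - 1 : ℝ) : ℂ) by push_cast; ring,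
        show ((1:ℂ) - (x:ℂ)) = ((1 - x : ℝ) : ℂ) by push_cast; ring,
        ← Complex.ofReal_cpow hx0, ← Complex.ofReal_cpow hx1, ← Complex.ofReal_mul]
    push_cast
    ring
  rw [hbeta] at hc
  have hgne : Complex.Gamma ((q:ℂ) + p) ≠ 0 := by
    apply Complex.Gamma_ne_zero
    intro n
    rw [show ((q:ℂ) + p) = ((q + p : ℝ) : ℂ) by push_cast; ring]
    intro h
    have h2 : (q + p : ℝ) = -(n : ℝ) := by exact_mod_cast h
    have : (0:ℝ) ≤ (n:ℝ) := n.cast_nonneg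
    nlinarith
  have hqp : Real.Gamma (q + p) ≠ 0 :=
    Real.Gamma_ne_zero (fun n h => by have : (0:ℝ) ≤ (n:ℝ) := n.cast_nonneg; nlinarith)
  rw [show ((q:ℂ) + p) = ((q + p : ℝ) : ℂ) by push_cast; ring, Complex.Gamma_ofReal,
    Complex.Gamma_ofReal, Complex.Gamma_ofReal, ← Complex.ofReal_mul, ← Complex.ofReal_mul] at hc
  have := Complex.ofReal_injective hc
  field_simp at this ⊢
  linarith [this]

lemma sum_gamma_ratio (M : ℕ) : ∀ (A B : ℝ), 0 < A → 0 < B →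
    ∑ i ∈ Finset.range (M + 1), (-1:ℝ) ^ i * (M.choose i) * (Real.Gamma (A + i) / Real.Gamma (B + i)) =
    Real.Gamma A * (∏ t ∈ Finset.range M, (B - A + t)) / Real.Gamma (B + M) := by
  induction M with
  | zero => intro A B hA hB; simp
  | succ M ih =>
    intro A B hA hB
    have hA1 : (0:ℝ) < A + 1 := by linarith
    have hB1 : (0:ℝ) < B + 1 := by linarith
    have hBM : (0:ℝ) < B + M := by positivity
    have hGBM : Real.Gamma (B + M) ≠ 0 := (Real.Gamma_pos_of_pos hBM).ne'
    set g : ℕ → ℝ := fun i => Real.Gamma (A + i) / Real.Gamma (B + i) with hg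
    have key : ∑ i ∈ Finset.range (M + 1 + 1), (-1:ℝ) ^ i * ((M+1).choose i) * g i =
        (∑ i ∈ Finset.range (M + 1), (-1:ℝ) ^ i * (M.choose i) * g i)
        - ∑ j ∈ Finset.range (M + 1), (-1:ℝ) ^ j * (M.choose j) *
            (Real.Gamma ((A+1) + j) / Real.Gamma ((B+1) + j)) := by
      rw [Finset.sum_range_succ' _ (M+1)]
      have split : ∑ j ∈ Finset.range (M + 1), (-1:ℝ) ^ (j+1) * ((M+1).choose (j+1)) * g (j+1) =
          (∑ j ∈ Finset.range (M + 1), (-1:ℝ) ^ (j+1) * (M.choose (j+1)) * g (j+1))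
          + ∑ j ∈ Finset.range (M + 1), (-1:ℝ) ^ (j+1) * (M.choose j) * g (j+1) := by
        rw [← Finset.sum_add_distrib]
        refine Finset.sum_congr rfl fun j _ => ?_
        have e1 : ((M+1).choose (j+1) : ℝ) = (M.choose j : ℝ) + (M.choose (j+1) : ℝ) := by
          exact_mod_cast congrArg Nat.cast (Nat.choose_succ_succ M j)
        rw [e1]; ring
      rw [split]
      have p1 : (∑ j ∈ Finset.range (M + 1), (-1:ℝ) ^ (j+1) * (M.choose (j+1)) * g (j+1))
          + (-1:ℝ)^0 * ((M+1).choose 0) * g 0 =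
          ∑ i ∈ Finset.range (M + 1), (-1:ℝ) ^ i * (M.choose i) * g i := by
        have := Finset.sum_range_succ' (fun i => (-1:ℝ) ^ i * (M.choose i) * g i) (M+1)
        rw [Finset.sum_range_succ (fun i => (-1:ℝ) ^ i * (M.choose i) * g i) (M+1)] at this
        simp only [Nat.choose_succ_self, Nat.cast_zero, mul_zero, zero_mul, add_zero] at this
        simp only [Nat.choose_zero_right, Nat.cast_one, pow_zero, one_mul, mul_zero, zero_mul] at this ⊢
        linarith [this]
      have p2 : ∑ j ∈ Finset.range (M + 1), (-1:ℝ) ^ (j+1) * (M.choose j) * g (j+1) =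
          - ∑ j ∈ Finset.range (M + 1), (-1:ℝ) ^ j * (M.choose j) *
            (Real.Gamma ((A+1) + j) / Real.Gamma ((B+1) + j)) := by
        rw [← Finset.sum_neg_distrib]
        refine Finset.sum_congr rfl fun j _ => ?_
        have : g (j+1) = Real.Gamma ((A+1) + j) / Real.Gamma ((B+1) + j) := by
          simp only [hg]; push_cast; ring_nf
        rw [this]; ring
      rw [p2]
      linarith [p1]
    rw [key, ih A B hA hB, ih (A+1) (B+1) hA1 hB1]
    have e2 : ∏ t ∈ Finset.range M, (B + 1 - (A + 1) + t) = ∏ t ∈ Finset.range M, (B - A + t) := by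
      refine Finset.prod_congr rfl fun t _ => by ring
    have e3 : Real.Gamma (A + 1) = A * Real.Gamma A := Real.Gamma_add_one hA.ne'
    have e4 : Real.Gamma (B + 1 + M) = (B + M) * Real.Gamma (B + M) := by
      rw [show B + 1 + (M:ℝ) = (B + M) + 1 by ring, Real.Gamma_add_one hBM.ne']
    have e5 : Real.Gamma (B + (M+1:ℕ)) = (B + M) * Real.Gamma (B + M) := by
      rw [show B + ((M:ℕ)+1:ℕ) = (B + M) + 1 by push_cast; ring, Real.Gamma_add_one hBM.ne']
    rw [e2, e3, e4, e5, Finset.prod_range_succ]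
    field_simp
    ring

lemma rpow_mul_npow {y a : ℝ} (hy : 0 ≤ y) (ha : -1 < a) (i : ℕ) :
    y ^ a * y ^ i = y ^ (a + i) := by
  rcases Nat.eq_zero_or_pos i with h | h
  · simp [h]
  · rw [← Real.rpow_natCast y i, ← Real.rpow_add' hy]
    have : (1:ℝ) ≤ (i:ℝ) := by exact_mod_cast h
    intro hc; nlinarith

lemma jacobi_cont (M : ℕ) (a b : ℝ) :
    Continuous (fun x : ℝ => jacobiP M a b (2 * x - 1)) := by
  unfold jacobiP
  fun_prop

lemma weight_jacobi_integrable (M : ℕ) (a b s : ℝ) (ha : -1 < a) (hs : 0 < s) :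
    IntervalIntegrable
      (fun x : ℝ => (1 - x) ^ a * x ^ (s - 1) * jacobiP M a b (2 * x - 1)) volume 0 1 := by
  have h1 : IntervalIntegrable (fun x : ℝ => (1 - x) ^ ((a+1) - 1) * x ^ (s - 1)) volume 0 1 :=
    realBeta_integrable (by linarith) hs
  have := h1.mul_continuousOn (g := fun x => jacobiP M a b (2 * x - 1))
    (jacobi_cont M a b).continuousOn
  simpa using this

lemma J_eval (M : ℕ) (a α s : ℝ) (ha : -1 < a) (hα : 0 < α) (hs : 0 < s) :
    ∫ x in (0:ℝ)..1, (1 - x) ^ a * x ^ (s - 1) * jacobiP M a α (2 * x - 1)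
    = Real.Gamma (a + M + 1) * Real.Gamma s * (∏ t ∈ Finset.range M, (s - α - M + t)) /
        (M.factorial * Real.Gamma (s + a + M + 1)) := by
  set C : ℝ := Real.Gamma (a + M + 1) / (M.factorial * Real.Gamma (a + α + M + 1)) with hC
  set d : ℕ → ℝ := fun i => (M.choose i : ℝ) * Real.Gamma (a + α + M + i + 1) /
      Real.Gamma (a + i + 1) with hd
  have hint : ∀ x ∈ Set.uIcc (0:ℝ) 1,
      (1 - x) ^ a * x ^ (s - 1) * jacobiP M a α (2 * x - 1) =
      ∑ i ∈ Finset.range (M + 1),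
        (C * d i * (-1) ^ i) * ((1 - x) ^ ((a + i + 1) - 1) * x ^ (s - 1)) := by
    intro x hx
    rw [Set.uIcc_of_le zero_le_one] at hx
    have h1x : (0:ℝ) ≤ 1 - x := by linarith [hx.2]
    have key : ∀ i : ℕ, (1 - x) ^ ((a + i + 1) - 1) = (1 - x) ^ a * (x - 1) ^ i * (-1:ℝ) ^ i := by
      intro i
      have e1 : (x - 1) ^ i * (-1:ℝ) ^ i = (1 - x) ^ i := by
        rw [← mul_pow]; ring_nf
      rw [mul_assoc, e1, show (a + i + 1) - 1 = a + i by ring, ← rpow_mul_npow h1x ha i]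
    unfold jacobiP
    rw [Finset.mul_sum, Finset.mul_sum]
    refine Finset.sum_congr rfl fun i _ => ?_
    rw [key i]
    have e2 : ((2 * x - 1 - 1) / 2) = x - 1 := by ring
    rw [e2]
    have h4 : (-1:ℝ)^i * (-1:ℝ)^i = 1 := by
      rw [← mul_pow]; norm_num
    simp only [hd]
    linear_combination (-(C * ((M.choose i : ℝ) * Real.Gamma (a + α + M + i + 1) /
      Real.Gamma (a + i + 1)) * (1-x)^a * (x-1)^i * x^(s-1))) * h4
  rw [intervalIntegral.integral_congr hint]
  have hintg : ∀ i ∈ Finset.range (M+1), IntervalIntegrable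
      (fun x : ℝ => (C * d i * (-1) ^ i) * ((1 - x) ^ ((a + i + 1) - 1) * x ^ (s - 1)))
      volume 0 1 := by
    intro i _
    have : (0:ℝ) ≤ (i:ℝ) := i.cast_nonneg
    exact (realBeta_integrable (p := a + i + 1) (q := s) (by linarith) hs).const_mul _
  rw [intervalIntegral.integral_finset_sum hintg]
  have hterm : ∀ i ∈ Finset.range (M+1),
      (∫ x in (0:ℝ)..1, (C * d i * (-1) ^ i) * ((1 - x) ^ ((a + i + 1) - 1) * x ^ (s - 1))) =
      (C * Real.Gamma s) * ((-1:ℝ)^i * (M.choose i) *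
        (Real.Gamma ((a + α + M + 1) + i) / Real.Gamma ((s + a + 1) + i))) := by
    intro i _
    have hi0 : (0:ℝ) ≤ (i:ℝ) := i.cast_nonneg
    rw [intervalIntegral.integral_const_mul,
      realBeta_eval (p := a + i + 1) (q := s) (by linarith) hs]
    have hg1 : Real.Gamma (a + i + 1) ≠ 0 := by
      refine (Real.Gamma_pos_of_pos ?_).ne'; linarith
    have e5 : Real.Gamma (s + (a + i + 1)) = Real.Gamma ((s + a + 1) + i) := by ring_nf
    have hcan : d i * Real.Gamma (a + i + 1) =
        (M.choose i : ℝ) * Real.Gamma (a + α + M + i + 1) := by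
      simp only [hd]; field_simp
    rw [e5, show C * d i * (-1:ℝ)^i * (Real.Gamma s * Real.Gamma (a+i+1) /
        Real.Gamma ((s+a+1) + i)) = C * Real.Gamma s * ((-1:ℝ)^i *
        (d i * Real.Gamma (a+i+1)) / Real.Gamma ((s+a+1) + i)) from by ring, hcan,
      show Real.Gamma ((a + α + M + 1) + i) = Real.Gamma (a + α + M + i + 1) from by ring_nf]
    ring
  rw [Finset.sum_congr rfl hterm, ← Finset.mul_sum,
    sum_gamma_ratio M (a + α + M + 1) (s + a + 1)
      (by have : (0:ℝ) ≤ (M:ℝ) := M.cast_nonneg; linarith) (by linarith)]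
  have hGA : Real.Gamma (a + α + M + 1) ≠ 0 := by
    refine (Real.Gamma_pos_of_pos ?_).ne'
    have : (0:ℝ) ≤ (M:ℝ) := M.cast_nonneg; linarith
  have e7 : ∏ t ∈ Finset.range M, (s + a + 1 - (a + α + M + 1) + t) =
      ∏ t ∈ Finset.range M, (s - α - M + t) :=
    Finset.prod_congr rfl fun t _ => by ring
  have e8 : Real.Gamma (s + a + 1 + M) = Real.Gamma (s + a + M + 1) := by ring_nf
  rw [e7, e8, hC]
  have hMf : (M.factorial : ℝ) ≠ 0 := by positivity
  have hGS : Real.Gamma (s + a + M + 1) ≠ 0 := by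
    refine (Real.Gamma_pos_of_pos ?_).ne'
    have : (0:ℝ) ≤ (M:ℝ) := M.cast_nonneg; linarith
  field_simp [hGA, hGS, hMf]

lemma prod_sub_nat (M : ℕ) : ∏ t ∈ Finset.range M, ((t:ℝ) - M) = (-1:ℝ)^M * M.factorial := by
  have h1 : ∏ t ∈ Finset.range M, ((t:ℝ) - M) =
      (-1:ℝ)^M * ∏ t ∈ Finset.range M, ((M:ℝ) - t) := by
    rw [show (∏ t ∈ Finset.range M, ((t:ℝ) - M)) =
        ∏ t ∈ Finset.range M, ((-1:ℝ) * ((M:ℝ) - t)) from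
      Finset.prod_congr rfl fun t _ => by ring,
      Finset.prod_mul_distrib, Finset.prod_const, Finset.card_range]
  have h2 : ∏ t ∈ Finset.range M, ((M:ℝ) - t) = M.factorial := by
    have := Finset.prod_range_reflect (fun j => (j:ℝ) + 1) M
    have e : ∀ j ∈ Finset.range M, ((M - 1 - j : ℕ) : ℝ) + 1 = (M:ℝ) - j := by
      intro j hj
      rw [Finset.mem_range] at hj
      have : ((M - 1 - j : ℕ) : ℝ) = (M:ℝ) - 1 - j := by
        push_cast [Nat.cast_sub (by omega : j ≤ M - 1), Nat.cast_sub (by omega : 1 ≤ M)]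
        ring
      rw [this]; ring
    rw [Finset.prod_congr rfl e] at this
    rw [this]
    have : ∏ j ∈ Finset.range M, ((j:ℝ) + 1) = ((∏ j ∈ Finset.range M, (j + 1) : ℕ) : ℝ) := by
      push_cast; rfl
    rw [this, Finset.prod_range_add_one_eq_factorial]
  rw [h1, h2]

lemma asc_eval (N : ℕ) (y : ℝ) :
    (ascPochhammer ℝ N).eval y = ∏ t ∈ Finset.range N, (y + t) := by
  induction N with
  | zero => simp
  | succ n ih => rw [ascPochhammer_succ_eval, ih, Finset.prod_range_succ]

lemma jacobi_at_zero (N : ℕ) (a b : ℝ) (ha : -1 < a) (hb : 0 < b) :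
    jacobiP N a b (-1) = (-1:ℝ)^N * (ascPochhammer ℝ N).eval (b+1) / N.factorial := by
  have hN0 : (0:ℝ) ≤ (N:ℝ) := N.cast_nonneg
  unfold jacobiP
  have hsum : ∑ i ∈ Finset.range (N + 1),
      (N.choose i : ℝ) * Real.Gamma (a + b + N + i + 1) / Real.Gamma (a + i + 1) *
        (((-1:ℝ) - 1) / 2) ^ i =
      ∑ i ∈ Finset.range (N + 1), (-1:ℝ)^i * (N.choose i) *
        (Real.Gamma ((a + b + N + 1) + i) / Real.Gamma ((a + 1) + i)) := by
    refine Finset.sum_congr rfl fun i _ => ?_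
    rw [show (((-1:ℝ) - 1) / 2) = -1 by norm_num,
      show (a + b + (N:ℝ) + 1) + i = a + b + N + i + 1 by ring,
      show (a + 1) + (i:ℝ) = a + i + 1 by ring]
    ring
  rw [hsum, sum_gamma_ratio N (a + b + N + 1) (a + 1) (by linarith) (by linarith)]
  have e1 : Real.Gamma (a + 1 + N) = Real.Gamma (a + N + 1) := by ring_nf
  have e2 : ∏ t ∈ Finset.range N, (a + 1 - (a + b + N + 1) + t) =
      (-1:ℝ)^N * (ascPochhammer ℝ N).eval (b+1) := by
    rw [asc_eval]
    rw [show (∏ t ∈ Finset.range N, (a + 1 - (a + b + (N:ℝ) + 1) + t)) =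
      ∏ t ∈ Finset.range N, ((-1:ℝ) * (b + N - t)) from
        Finset.prod_congr rfl fun t _ => by ring, Finset.prod_mul_distrib,
      Finset.prod_const, Finset.card_range]
    congr 1
    have := Finset.prod_range_reflect (fun j => (b:ℝ) + 1 + j) N
    rw [← this]
    refine Finset.prod_congr rfl fun j hj => ?_
    rw [Finset.mem_range] at hj
    have : ((N - 1 - j : ℕ) : ℝ) = (N:ℝ) - 1 - j := by
      push_cast [Nat.cast_sub (by omega : j ≤ N - 1), Nat.cast_sub (by omega : 1 ≤ N)]
      ring
    rw [this]; ring
  rw [e1, e2]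
  have hg1 : Real.Gamma (a + N + 1) ≠ 0 := by
    refine (Real.Gamma_pos_of_pos ?_).ne'; linarith
  have hg2 : Real.Gamma (a + b + N + 1) ≠ 0 := by
    refine (Real.Gamma_pos_of_pos ?_).ne'; linarith
  have hNf : (N.factorial : ℝ) ≠ 0 := by positivity
  field_simp

lemma jacobi_poly_rep (N : ℕ) (a b : ℝ) :
    ∃ f : ℕ → ℝ, (∀ x : ℝ, jacobiP N a b (2 * x - 1) =
        ∑ r ∈ Finset.range (N + 1), f r * x ^ r) ∧
      f 0 = jacobiP N a b (-1) := by
  set Q : Polynomial ℝ := Polynomial.C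
      (Real.Gamma (a + N + 1) / (N.factorial * Real.Gamma (a + b + N + 1))) *
    ∑ i ∈ Finset.range (N + 1), Polynomial.C
      ((N.choose i : ℝ) * Real.Gamma (a + b + N + i + 1) / Real.Gamma (a + i + 1)) *
        (Polynomial.X - 1) ^ i with hQ
  have heval : ∀ x : ℝ, Q.eval x = jacobiP N a b (2 * x - 1) := by
    intro x
    unfold jacobiP
    simp only [hQ, Polynomial.eval_mul, Polynomial.eval_C, Polynomial.eval_finset_sum,
      Polynomial.eval_pow, Polynomial.eval_sub, Polynomial.eval_X, Polynomial.eval_one]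
    congr 1
    refine Finset.sum_congr rfl fun i _ => ?_
    rw [show (2 * x - 1 - 1) / 2 = x - 1 by ring]
  have hdeg : Q.natDegree < N + 1 := by
    refine Nat.lt_succ_of_le ?_
    refine le_trans (Polynomial.natDegree_mul_le) ?_
    simp only [Polynomial.natDegree_C, zero_add]
    refine Polynomial.natDegree_sum_le_of_forall_le _ _ fun i hi => ?_
    refine le_trans (Polynomial.natDegree_mul_le) ?_
    simp only [Polynomial.natDegree_C, zero_add]
    refine le_trans (Polynomial.natDegree_pow_le) ?_
    have : (Polynomial.X - 1 : Polynomial ℝ).natDegree ≤ 1 := by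
      refine le_trans (Polynomial.natDegree_sub_le _ _) ?_
      simp
    calc i * (Polynomial.X - 1 : Polynomial ℝ).natDegree ≤ i * 1 :=
          Nat.mul_le_mul_left i this
      _ = i := Nat.mul_one i
      _ ≤ N := by rw [Finset.mem_range] at hi; omega
  refine ⟨fun r => Q.coeff r, fun x => ?_, ?_⟩
  · rw [← heval, Polynomial.eval_eq_sum_range' hdeg]
  · show Q.coeff 0 = _
    rw [Polynomial.coeff_zero_eq_eval_zero, heval 0]
    norm_num

/-- For `α > 0`, `β, γ > -1` and `m ≥ n ≥ k ≥ 0`,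
`I^{α,β,γ}_{(m-k,k),(n-k,k)} = ∫₀¹ (1-x)^{2k+β+γ+1} x^{α-1}
P_{m-k}^{(β+γ+2k+1,α)}(2x-1) P_{n-k}^{(β+γ+2k+1,α)}(2x-1) dx
 = (-1)^{n+m} ((α+1)_{n-k}/(n-k)!) Γ(β+γ+m+k+2)Γ(α)/Γ(α+β+γ+m+k+2)`. -/
theorem I_integral_eval (α β γ : ℝ) (hα : 0 < α) (hβ : -1 < β) (hγ : -1 < γ)
    (m n k : ℕ) (hk : k ≤ n) (hn : n ≤ m) :
    (∫ x in (0:ℝ)..1, (1 - x) ^ (2 * (k : ℝ) + β + γ + 1) * x ^ (α - 1) *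
        jacobiP (m - k) (β + γ + 2 * k + 1) α (2 * x - 1) *
        jacobiP (n - k) (β + γ + 2 * k + 1) α (2 * x - 1)) =
      (-1 : ℝ) ^ (n + m) * ((ascPochhammer ℝ (n - k)).eval (α + 1) / ((n - k).factorial : ℝ)) *
        (Real.Gamma (β + γ + m + k + 2) * Real.Gamma α /
          Real.Gamma (α + β + γ + m + k + 2)) := by
  have hkm : k ≤ m := le_trans hk hn
  set M : ℕ := m - k with hM
  set N : ℕ := n - k with hN
  set a : ℝ := β + γ + 2 * (k : ℝ) + 1 with hadef
  have hk0 : (0:ℝ) ≤ (k:ℝ) := k.cast_nonneg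
  have hM0 : (0:ℝ) ≤ (M:ℝ) := M.cast_nonneg
  have ha : -1 < a := by rw [hadef]; linarith
  have hNM : N ≤ M := by omega
  obtain ⟨f, hf, hf0⟩ := jacobi_poly_rep N a α
  have hint : ∀ x ∈ Set.uIcc (0:ℝ) 1,
      (1 - x) ^ (2 * (k : ℝ) + β + γ + 1) * x ^ (α - 1) * jacobiP M a α (2 * x - 1) *
        jacobiP N a α (2 * x - 1)
      = ∑ r ∈ Finset.range (N + 1),
          f r * ((1 - x) ^ a * x ^ ((α + r) - 1) * jacobiP M a α (2 * x - 1)) := by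
    intro x hx
    rw [Set.uIcc_of_le zero_le_one] at hx
    have hx0 : (0:ℝ) ≤ x := hx.1
    rw [hf x, Finset.mul_sum]
    refine Finset.sum_congr rfl fun r _ => ?_
    have hxx : x ^ (α - 1) * x ^ r = x ^ ((α + r) - 1) := by
      rw [show (α + (r:ℝ)) - 1 = (α - 1) + r by ring]
      exact rpow_mul_npow hx0 (by linarith) r
    have hexp : (2 * (k:ℝ) + β + γ + 1) = a := by rw [hadef]; ring
    rw [hexp]
    calc (1 - x) ^ a * x ^ (α - 1) * jacobiP M a α (2 * x - 1) * (f r * x ^ r)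
        = f r * ((1 - x) ^ a * (x ^ (α - 1) * x ^ r) * jacobiP M a α (2 * x - 1)) := by ring
      _ = f r * ((1 - x) ^ a * x ^ ((α + r) - 1) * jacobiP M a α (2 * x - 1)) := by rw [hxx]
  have hswap := intervalIntegral.integral_finset_sum (μ := volume) (a := 0) (b := 1)
    (s := Finset.range (N + 1))
    (f := fun r x => f r * ((1 - x) ^ a * x ^ ((α + r) - 1) * jacobiP M a α (2 * x - 1)))
    (fun r _ =>
      (weight_jacobi_integrable M a α (α + r) ha
        (by have : (0:ℝ) ≤ (r:ℝ) := r.cast_nonneg; linarith)).const_mul _)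
  rw [intervalIntegral.integral_congr hint, hswap]
  simp_rw [intervalIntegral.integral_const_mul]
  have hsum : ∑ r ∈ Finset.range (N + 1),
      f r * ∫ x in (0:ℝ)..1, (1 - x) ^ a * x ^ ((α + r) - 1) * jacobiP M a α (2 * x - 1)
      = f 0 * ((-1:ℝ)^M * Real.Gamma (a + M + 1) * Real.Gamma α /
          Real.Gamma (α + a + M + 1)) := by
    rw [Finset.sum_eq_single 0]
    · simp only [Nat.cast_zero, add_zero]
      rw [J_eval M a α α ha hα hα]
      have e1 : ∏ t ∈ Finset.range M, (α - α - (M:ℝ) + t) = (-1:ℝ)^M * M.factorial := by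
        rw [show (∏ t ∈ Finset.range M, (α - α - (M:ℝ) + t)) =
            ∏ t ∈ Finset.range M, ((t:ℝ) - M) from
          Finset.prod_congr rfl fun t _ => by ring]
        exact prod_sub_nat M
      rw [e1]
      have e3 : Real.Gamma (α + a + (M:ℝ) + 1) = Real.Gamma (α + a + M + 1) := rfl
      have hMf : (M.factorial : ℝ) ≠ 0 := by positivity
      have hGS : Real.Gamma (α + a + M + 1) ≠ 0 := by
        refine (Real.Gamma_pos_of_pos ?_).ne'; linarith
      field_simp
    · intro r hr hr0
      have hr1 : 1 ≤ r := Nat.one_le_iff_ne_zero.mpr hr0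
      have hrN : r ≤ N := by
        rw [Finset.mem_range] at hr; omega
      have hrM : r ≤ M := le_trans hrN hNM
      rw [J_eval M a α (α + r) ha hα
        (by have : (0:ℝ) ≤ (r:ℝ) := r.cast_nonneg; linarith)]
      have hzero : ∏ t ∈ Finset.range M, ((α + r) - α - M + t) = 0 := by
        refine Finset.prod_eq_zero (i := M - r) (Finset.mem_range.mpr (by omega)) ?_
        have : ((M - r : ℕ) : ℝ) = (M:ℝ) - r := by
          push_cast [Nat.cast_sub hrM]; ring
        rw [this]; ring
      rw [hzero]
      simp
    · intro h
      exact absurd (Finset.mem_range.mpr (Nat.succ_pos N)) h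
  rw [hsum, hf0, jacobi_at_zero N a α ha hα]
  have hGam1 : Real.Gamma (a + M + 1) = Real.Gamma (β + γ + m + k + 2) := by
    congr 1
    rw [hadef, hM]
    push_cast [Nat.cast_sub hkm]
    ring
  have hGam2 : Real.Gamma (α + a + M + 1) = Real.Gamma (α + β + γ + m + k + 2) := by
    congr 1
    rw [hadef, hM]
    push_cast [Nat.cast_sub hkm]
    ring
  have hsign : (-1:ℝ)^N * (-1:ℝ)^M = (-1:ℝ)^(n + m) := by
    have h2 : n + m = (N + M) + 2 * k := by omega
    rw [h2, pow_add, pow_mul, ← pow_add]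
    norm_num
  rw [hGam1, hGam2]
  have hNf : (N.factorial : ℝ) ≠ 0 := by positivity
  have hGS : Real.Gamma (α + β + γ + m + k + 2) ≠ 0 := by
    refine (Real.Gamma_pos_of_pos ?_).ne'
    have h1 : (0:ℝ) ≤ (m:ℝ) := m.cast_nonneg
    linarith
  field_simp
  linear_combination ((ascPochhammer ℝ N).eval (α + 1) * Real.Gamma (β + γ + ↑m + ↑k + 2)) * hsign
end

section
/- For Re(a) > 0 and Re(b) > -1 and n ≥ 0, ∫₀¹ (1-y)^{a-1} y^b P_n^{(a,b)}(2y-1) dy = Γ(a)Γ(b+n+1)/Γ(a+b+n+1), where P_n^{(a,b)} is the Jacobi polynomial. -/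
open MeasureTheory Real

lemma betaIntegrable {p q : ℝ} (hp : -1 < p) (hq : -1 < q) :
    IntervalIntegrable (fun y : ℝ => y ^ p * (1 - y) ^ q) volume 0 1 := by
  have h1 : IntervalIntegrable (fun y : ℝ => y ^ p * (1 - y) ^ q) volume 0 (1/2) := by
    apply (intervalIntegral.intervalIntegrable_rpow' hp).mul_continuousOn
    apply ContinuousOn.rpow_const (by fun_prop)
    intro y hy
    rw [Set.uIcc_of_le (by norm_num)] at hy
    left; intro h; have := hy.2; nlinarith [hy.1, hy.2]
  have h2 : IntervalIntegrable (fun y : ℝ => (1 - y) ^ q) volume (1/2) 1 := by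
    have := (intervalIntegral.intervalIntegrable_rpow' hq (a := 0) (b := 1/2)).comp_sub_left 1
    norm_num at this
    exact this.symm
  have h3 : IntervalIntegrable (fun y : ℝ => y ^ p * (1 - y) ^ q) volume (1/2) 1 := by
    apply h2.continuousOn_mul
    apply ContinuousOn.rpow_const (by fun_prop)
    intro y hy
    rw [Set.uIcc_of_le (by norm_num)] at hy
    left; intro h; rw [h] at hy; norm_num at hy
  exact h1.trans h3

lemma realBeta {p q : ℝ} (hp : 0 < p) (hq : 0 < q) :
    ∫ y in (0:ℝ)..1, y ^ (p - 1) * (1 - y) ^ (q - 1) =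
      Real.Gamma p * Real.Gamma q / Real.Gamma (p + q) := by
  have hc := Complex.Gamma_mul_Gamma_eq_betaIntegral
    (s := (p : ℂ)) (t := (q : ℂ)) (by simpa using hp) (by simpa using hq)
  have hbeta : Complex.betaIntegral p q =
      ((∫ y in (0:ℝ)..1, y ^ (p - 1) * (1 - y) ^ (q - 1) : ℝ) : ℂ) := by
    rw [Complex.betaIntegral, ← intervalIntegral.integral_ofReal]
    apply intervalIntegral.integral_congr
    intro y hy
    rw [Set.uIcc_of_le (by norm_num)] at hy
    simp only []
    show (y:ℂ) ^ ((p:ℂ) - 1) * (1 - (y:ℂ)) ^ ((q:ℂ) - 1) = ((y ^ (p - 1) * (1 - y) ^ (q - 1) : ℝ) : ℂ)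
    rw [Complex.ofReal_mul, Complex.ofReal_cpow hy.1, Complex.ofReal_cpow (show (0:ℝ) ≤ 1 - y by linarith [hy.2])]
    push_cast
    ring
  rw [hbeta, ← Complex.ofReal_add, Complex.Gamma_ofReal, Complex.Gamma_ofReal,
    Complex.Gamma_ofReal, ← Complex.ofReal_mul, ← Complex.ofReal_mul] at hc
  have := Complex.ofReal_injective hc
  have hG : Real.Gamma (p + q) ≠ 0 := (Real.Gamma_pos_of_pos (by linarith)).ne'
  field_simp
  linarith [this]


lemma Gamma_add_nat {x : ℝ} (hx : 0 < x) (k : ℕ) :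
    Real.Gamma (x + k) = Real.Gamma x * ∏ j ∈ Finset.range k, (x + j) := by
  induction k with
  | zero => simp
  | succ k ih =>
    have : x + (k + 1 : ℕ) = (x + k) + 1 := by push_cast; ring
    rw [this, Real.Gamma_add_one (by positivity), ih, Finset.prod_range_succ]
    ring

lemma sum_choose_succ (n : ℕ) (f : ℕ → ℝ) :
    ∑ m ∈ Finset.range (n + 2), (-1 : ℝ) ^ m * ((n + 1).choose m : ℝ) * f m
    = ∑ m ∈ Finset.range (n + 1), (-1 : ℝ) ^ m * (n.choose m : ℝ) * (f m - f (m + 1)) := by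
  have h1 := Finset.sum_range_succ' (fun m => (-1 : ℝ) ^ m * ((n + 1).choose m : ℝ) * f m) (n + 1)
  have h2 := Finset.sum_range_succ' (fun m => (-1 : ℝ) ^ m * (n.choose m : ℝ) * f m) (n + 1)
  have h3 : ∑ m ∈ Finset.range (n + 2), (-1 : ℝ) ^ m * (n.choose m : ℝ) * f m
      = ∑ m ∈ Finset.range (n + 1), (-1 : ℝ) ^ m * (n.choose m : ℝ) * f m := by
    rw [Finset.sum_range_succ, Nat.choose_succ_self]; simp
  simp only [Finset.mul_sum, mul_sub, Finset.sum_sub_distrib]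
  rw [h1]
  have key : ∀ k, (-1 : ℝ) ^ (k+1) * (((n + 1).choose (k+1)) : ℝ) * f (k+1)
      = (-1 : ℝ) ^ (k+1) * ((n.choose k) : ℝ) * f (k+1)
        + (-1 : ℝ) ^ (k+1) * ((n.choose (k+1)) : ℝ) * f (k+1) := by
    intro k
    rw [Nat.choose_succ_succ]
    push_cast
    ring
  rw [Finset.sum_congr rfl (fun k _ => key k), Finset.sum_add_distrib]
  have h4 : (∑ k ∈ Finset.range (n + 1), (-1 : ℝ) ^ (k+1) * ((n.choose (k+1)) : ℝ) * f (k+1))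
      + (-1 : ℝ) ^ 0 * ((n.choose 0) : ℝ) * f 0
      = ∑ m ∈ Finset.range (n + 1), (-1 : ℝ) ^ m * (n.choose m : ℝ) * f m := by
    rw [← h2, h3]
  have h5 : ∀ k, (-1 : ℝ) ^ (k+1) * ((n.choose k) : ℝ) * f (k+1)
      = -((-1 : ℝ) ^ k * ((n.choose k) : ℝ) * f (k+1)) := by intro k; ring
  rw [Finset.sum_congr rfl (fun k _ => h5 k), Finset.sum_neg_distrib]
  simp only [Nat.choose_zero_right, pow_zero, Nat.cast_one, one_mul] at h4 ⊢
  linarith [h4]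

lemma key_sum (n : ℕ) : ∀ (x a : ℝ), (∀ j : ℕ, j ≤ n → a + (j : ℝ) ≠ 0) →
    ∑ m ∈ Finset.range (n + 1),
      (-1 : ℝ) ^ m * (n.choose m : ℝ) * ((∏ j ∈ Finset.range n, (x + m + j)) / (a + m))
    = (n.factorial : ℝ) * (∏ j ∈ Finset.range n, (x - a + j)) /
        ∏ j ∈ Finset.range (n + 1), (a + j) := by
  induction n with
  | zero =>
    intro x a h
    simp
  | succ n ih =>
    intro x a h
    have ha0 : a ≠ 0 := by simpa using h 0 (Nat.zero_le _)
    have haj : ∀ j : ℕ, j ≤ n → a + 1 + (j : ℝ) ≠ 0 := by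
      intro j hj
      have h2 := h (j + 1) (by omega)
      push_cast at h2
      intro hc
      exact h2 (by linarith)
    have han : a + 1 + (n : ℝ) ≠ 0 := haj n le_rfl
    set f : ℕ → ℝ := fun m => (∏ j ∈ Finset.range (n + 1), (x + m + j)) / (a + m) with hf
    have step : ∀ m ∈ Finset.range (n + 1),
        (-1 : ℝ) ^ m * (n.choose m : ℝ) * (f m - f (m + 1))
        = (a - x - n) * ((-1 : ℝ) ^ m * (n.choose m : ℝ) *
              ((∏ j ∈ Finset.range n, ((x + 1) + m + j)) / ((a + 1) + m)))
          + (x - a) * ((-1 : ℝ) ^ m * (n.choose m : ℝ) *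
              ((∏ j ∈ Finset.range n, ((x + 1) + m + j)) / (a + m))) := by
      intro m hm
      rw [Finset.mem_range] at hm
      have hm0 : a + (m : ℝ) ≠ 0 := h m (by omega)
      have hm1 : (a + 1) + (m : ℝ) ≠ 0 := haj m (by omega)
      have e1 : ∏ j ∈ Finset.range (n + 1), (x + m + j)
          = (x + m) * ∏ j ∈ Finset.range n, ((x + 1) + m + j) := by
        rw [Finset.prod_range_succ']
        rw [Finset.prod_congr rfl (fun j _ => by push_cast; ring :
          ∀ j ∈ Finset.range n, (x + m + ((j + 1 : ℕ) : ℝ)) = (x + 1) + m + j)]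
        push_cast
        ring
      have e2 : ∏ j ∈ Finset.range (n + 1), (x + ((m + 1 : ℕ) : ℝ) + j)
          = (∏ j ∈ Finset.range n, ((x + 1) + m + j)) * (x + m + 1 + n) := by
        rw [Finset.prod_range_succ]
        rw [Finset.prod_congr rfl (fun j _ => by push_cast; ring :
          ∀ j ∈ Finset.range n, (x + ((m + 1 : ℕ) : ℝ) + j) = (x + 1) + m + j)]
        push_cast
        ring
      have hc : (a : ℝ) + ((m + 1 : ℕ) : ℝ) = a + ↑m + 1 := by push_cast; ring
      have hc2 : a + 1 + (m : ℝ) = a + ↑m + 1 := by ring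
      have hm2 : a + (m : ℝ) + 1 ≠ 0 := by rw [← hc2]; exact hm1
      simp only [hf, e1, e2, hc, hc2]
      field_simp
      ring
    calc ∑ m ∈ Finset.range (n + 1 + 1),
          (-1 : ℝ) ^ m * ((n + 1).choose m : ℝ) *
            ((∏ j ∈ Finset.range (n + 1), (x + m + j)) / (a + m))
        = ∑ m ∈ Finset.range (n + 2), (-1 : ℝ) ^ m * ((n + 1).choose m : ℝ) * f m := rfl
      _ = ∑ m ∈ Finset.range (n + 1), (-1 : ℝ) ^ m * (n.choose m : ℝ) * (f m - f (m + 1)) :=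
          sum_choose_succ n f
      _ = (a - x - n) * ∑ m ∈ Finset.range (n + 1), (-1 : ℝ) ^ m * (n.choose m : ℝ) *
              ((∏ j ∈ Finset.range n, ((x + 1) + m + j)) / ((a + 1) + m))
          + (x - a) * ∑ m ∈ Finset.range (n + 1), (-1 : ℝ) ^ m * (n.choose m : ℝ) *
              ((∏ j ∈ Finset.range n, ((x + 1) + m + j)) / (a + m)) := by
          rw [Finset.sum_congr rfl step, Finset.sum_add_distrib, ← Finset.mul_sum,
            ← Finset.mul_sum]
      _ = (a - x - n) * ((n.factorial : ℝ) * (∏ j ∈ Finset.range n, ((x + 1) - (a + 1) + j)) /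
              ∏ j ∈ Finset.range (n + 1), ((a + 1) + j))
          + (x - a) * ((n.factorial : ℝ) * (∏ j ∈ Finset.range n, ((x + 1) - a + j)) /
              ∏ j ∈ Finset.range (n + 1), (a + j)) := by
          rw [ih (x + 1) (a + 1) haj, ih (x + 1) a (fun j hj => h j (by omega))]
      _ = ((n + 1).factorial : ℝ) * (∏ j ∈ Finset.range (n + 1), (x - a + j)) /
            ∏ j ∈ Finset.range (n + 1 + 1), (a + j) := by
          set A : ℝ := ∏ j ∈ Finset.range n, (x - a + j) with hA
          set B : ℝ := ∏ j ∈ Finset.range n, ((x + 1) - a + j) with hB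
          set E : ℝ := ∏ j ∈ Finset.range n, ((a + 1) + j) with hE
          have fA : ∏ j ∈ Finset.range n, ((x + 1) - (a + 1) + j) = A :=
            Finset.prod_congr rfl (fun j _ => by ring)
          have fP : ∏ j ∈ Finset.range (n + 1), (x - a + j) = (x - a) * B := by
            rw [Finset.prod_range_succ', Finset.prod_congr rfl (fun j _ => by push_cast; ring :
              ∀ j ∈ Finset.range n, (x - a + ((j + 1 : ℕ) : ℝ)) = (x + 1) - a + j)]
            push_cast; ring
          have fP2 : ∏ j ∈ Finset.range (n + 1), (x - a + j) = A * (x - a + n) := by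
            rw [Finset.prod_range_succ]
          have hrel : A * (x - a + n) = (x - a) * B := by rw [← fP2, fP]
          have fD1 : ∏ j ∈ Finset.range (n + 1), ((a + 1) + j) = E * (a + 1 + n) := by
            rw [Finset.prod_range_succ]
          have fD0 : ∏ j ∈ Finset.range (n + 1), (a + j) = E * a := by
            rw [Finset.prod_range_succ', Finset.prod_congr rfl (fun j _ => by push_cast; ring :
              ∀ j ∈ Finset.range n, (a + ((j + 1 : ℕ) : ℝ)) = (a + 1) + j)]
            push_cast; ring
          have fD2 : ∏ j ∈ Finset.range (n + 1 + 1), (a + j) = E * a * (a + 1 + n) := by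
            rw [Finset.prod_range_succ, fD0]
            push_cast; ring
          have hEne : E ≠ 0 := by
            rw [hE, Finset.prod_ne_zero_iff]
            intro j hj
            exact haj j (by rw [Finset.mem_range] at hj; omega)
          rw [fA, fP, fD1, fD0, fD2, Nat.factorial_succ]
          have hd1 : E * (a + 1 + (n : ℝ)) ≠ 0 := mul_ne_zero hEne han
          have hd2 : E * a ≠ 0 := mul_ne_zero hEne ha0
          have hd3 : E * a * (a + 1 + (n : ℝ)) ≠ 0 := mul_ne_zero hd2 han
          have main : (a - x - (n : ℝ)) * ((n.factorial : ℝ) * A / (E * (a + 1 + n)))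
              + (x - a) * ((n.factorial : ℝ) * B / (E * a))
              = ((n : ℝ) + 1) * (n.factorial : ℝ) * ((x - a) * B) / (E * a * (a + 1 + n)) := by
            rw [← mul_div_assoc, ← mul_div_assoc, div_add_div _ _ hd1 hd2,
              div_eq_div_iff (mul_ne_zero hd1 hd2) hd3]
            linear_combination (-(E ^ 2 * a ^ 2 * (a + 1 + (n : ℝ)) * (n.factorial : ℝ))) * hrel
          push_cast
          linear_combination main

lemma term_int (a b : ℝ) (ha : 0 < a) (hb : -1 < b) (m : ℕ) :
    ∫ y in (0:ℝ)..1, (1 - y) ^ (a - 1) * y ^ b * (y - 1) ^ m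
    = (-1 : ℝ) ^ m *
        (Real.Gamma (b + 1) * Real.Gamma (a + m) / Real.Gamma ((b + 1) + (a + m))) := by
  have hq : (0:ℝ) < a + m := by positivity
  have heq : Set.EqOn (fun y : ℝ => (1 - y) ^ (a - 1) * y ^ b * (y - 1) ^ m)
      (fun y : ℝ => (-1 : ℝ) ^ m * (y ^ ((b + 1) - 1) * (1 - y) ^ ((a + m) - 1)))
      (Set.uIcc 0 1) := by
    intro y hy
    rw [Set.uIcc_of_le (by norm_num)] at hy
    simp only []
    rcases eq_or_lt_of_le hy.2 with h1 | h1
    · subst h1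
      cases m with
      | zero => norm_num
      | succ k =>
        have hk : (0:ℝ) ≤ (k:ℝ) := Nat.cast_nonneg k
        have hne : a + ((k : ℝ) + 1) - 1 ≠ 0 := by nlinarith
        norm_num [Real.zero_rpow hne]
    · have h2 : (y - 1) ^ m = (-1 : ℝ) ^ m * (1 - y) ^ m := by
        rw [show y - 1 = -(1 - y) by ring, neg_pow]
      have h3 : ((1:ℝ) - y) ^ (a - 1) * (1 - y) ^ m = (1 - y) ^ ((a + m) - 1) := by
        rw [← Real.rpow_natCast (1 - y) m, ← Real.rpow_add (by linarith),
          show a - 1 + (m : ℝ) = (a + m) - 1 by ring]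
      have h4 : y ^ ((b + 1) - 1) = y ^ b := by norm_num
      rw [h2, h4, ← h3]
      ring
  rw [intervalIntegral.integral_congr heq, intervalIntegral.integral_const_mul,
    realBeta (by linarith) hq]


/-- For `a > 0`, `b > -1` and `n ≥ 0`,
`∫₀¹ (1-y)^{a-1} y^b P_n^{(a,b)}(2y-1) dy = Γ(a)Γ(b+n+1)/Γ(a+b+n+1)`. -/
theorem jacobi_shifted_integral (a b : ℝ) (ha : 0 < a) (hb : -1 < b) (n : ℕ) :
    (∫ y in (0:ℝ)..1, (1 - y) ^ (a - 1) * y ^ b * jacobiP n a b (2 * y - 1)) =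
      Real.Gamma a * Real.Gamma (b + n + 1) / Real.Gamma (a + b + n + 1) := by
  set K : ℝ := Real.Gamma (a + n + 1) / (n.factorial * Real.Gamma (a + b + n + 1)) with hK
  set c : ℕ → ℝ := fun m =>
    (n.choose m : ℝ) * Real.Gamma (a + b + n + m + 1) / Real.Gamma (a + m + 1) with hc
  have heq : Set.EqOn (fun y : ℝ => (1 - y) ^ (a - 1) * y ^ b * jacobiP n a b (2 * y - 1))
      (fun y : ℝ => ∑ m ∈ Finset.range (n + 1),
        (K * c m) * ((1 - y) ^ (a - 1) * y ^ b * (y - 1) ^ m)) (Set.uIcc 0 1) := by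
    intro y _
    simp only [jacobiP, ← hK, ← hc]
    rw [show (2 * y - 1 - 1) / 2 = y - 1 by ring, Finset.mul_sum, Finset.mul_sum]
    exact Finset.sum_congr rfl fun m _ => by ring
  have hint : ∀ m ∈ Finset.range (n + 1), IntervalIntegrable
      (fun y : ℝ => (K * c m) * ((1 - y) ^ (a - 1) * y ^ b * (y - 1) ^ m)) volume 0 1 := by
    intro m _
    have base : IntervalIntegrable (fun y : ℝ => y ^ b * (1 - y) ^ (a - 1)) volume 0 1 :=
      betaIntegrable hb (by linarith)
    have h1 : IntervalIntegrable
        (fun y : ℝ => (y ^ b * (1 - y) ^ (a - 1)) * (y - 1) ^ m) volume 0 1 :=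
      base.mul_continuousOn (by fun_prop)
    have h2 := h1.const_mul (K * c m)
    have hfun : (fun y : ℝ => (K * c m) * ((y ^ b * (1 - y) ^ (a - 1)) * (y - 1) ^ m))
        = fun y : ℝ => (K * c m) * ((1 - y) ^ (a - 1) * y ^ b * (y - 1) ^ m) := by
      funext y; ring
    rwa [hfun] at h2
  rw [intervalIntegral.integral_congr heq, intervalIntegral.integral_finset_sum hint]
  have hterm : ∀ m ∈ Finset.range (n + 1),
      (∫ y in (0:ℝ)..1, (K * c m) * ((1 - y) ^ (a - 1) * y ^ b * (y - 1) ^ m))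
      = (K * c m) * ((-1 : ℝ) ^ m *
          (Real.Gamma (b + 1) * Real.Gamma (a + m) / Real.Gamma ((b + 1) + (a + m)))) := by
    intro m _
    rw [intervalIntegral.integral_const_mul, term_int a b ha hb m]
  rw [Finset.sum_congr rfl hterm]
  -- Gamma function bookkeeping
  have hb1 : (0:ℝ) < b + 1 := by linarith
  have hGb1 : Real.Gamma (b + 1) ≠ 0 := (Real.Gamma_pos_of_pos hb1).ne'
  have hGabn : Real.Gamma (a + b + n + 1) ≠ 0 := by
    have : (0:ℝ) < a + b + n + 1 := by
      have := Nat.cast_nonneg (α := ℝ) n; linarith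
    exact (Real.Gamma_pos_of_pos this).ne'
  have hfac : ((n.factorial : ℝ)) ≠ 0 := Nat.cast_ne_zero.mpr n.factorial_ne_zero
  set K' : ℝ := Real.Gamma (a + n + 1) * Real.Gamma (b + 1) /
      ((n.factorial : ℝ) * Real.Gamma (a + b + n + 1)) with hK'
  have hsummand : ∀ m ∈ Finset.range (n + 1),
      (K * c m) * ((-1 : ℝ) ^ m *
          (Real.Gamma (b + 1) * Real.Gamma (a + m) / Real.Gamma ((b + 1) + (a + m))))
      = K' * ((-1 : ℝ) ^ m * (n.choose m : ℝ) *
          ((∏ j ∈ Finset.range n, ((a + b + 1) + m + j)) / (a + m))) := by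
    intro m _
    have hm0 : (0:ℝ) < a + m := by positivity
    have habm : (0:ℝ) < a + b + m + 1 := by
      have := Nat.cast_nonneg (α := ℝ) m; linarith
    have g1 : Real.Gamma (a + b + n + m + 1)
        = Real.Gamma (a + b + m + 1) * ∏ j ∈ Finset.range n, ((a + b + 1) + m + j) := by
      rw [show a + b + (n:ℝ) + m + 1 = (a + b + m + 1) + n by ring, Gamma_add_nat habm n]
      exact congrArg _ (Finset.prod_congr rfl fun j _ => by ring)
    have g2 : Real.Gamma (a + m + 1) = (a + m) * Real.Gamma (a + m) :=
      Real.Gamma_add_one hm0.ne'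
    have g5 : Real.Gamma ((b + 1) + (a + m)) = Real.Gamma (a + b + m + 1) := by
      rw [show (b + 1) + (a + (m:ℝ)) = a + b + m + 1 by ring]
    have hGam : Real.Gamma (a + m) ≠ 0 := (Real.Gamma_pos_of_pos hm0).ne'
    have hGabm : Real.Gamma (a + b + m + 1) ≠ 0 := (Real.Gamma_pos_of_pos habm).ne'
    simp only [hK, hc, hK', g1, g2, g5]
    field_simp
  rw [Finset.sum_congr rfl hsummand, ← Finset.mul_sum]
  have hja : ∀ j : ℕ, j ≤ n → a + (j : ℝ) ≠ 0 := by
    intro j _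
    have : (0:ℝ) ≤ (j:ℝ) := Nat.cast_nonneg j
    positivity
  rw [key_sum n (a + b + 1) a hja]
  have g3 : Real.Gamma (a + n + 1) = Real.Gamma a * ∏ j ∈ Finset.range (n + 1), (a + j) := by
    rw [show a + (n:ℝ) + 1 = a + ((n + 1 : ℕ) : ℝ) by push_cast; ring, Gamma_add_nat ha (n + 1)]
  have g4 : Real.Gamma (b + n + 1) = Real.Gamma (b + 1) * ∏ j ∈ Finset.range n, (b + 1 + j) := by
    rw [show b + (n:ℝ) + 1 = (b + 1) + n by ring, Gamma_add_nat hb1 n]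
  have gp : ∏ j ∈ Finset.range n, ((a + b + 1) - a + (j:ℝ)) = ∏ j ∈ Finset.range n, (b + 1 + (j:ℝ)) :=
    Finset.prod_congr rfl fun j _ => by ring
  have hprod : (∏ j ∈ Finset.range (n + 1), (a + (j:ℝ))) ≠ 0 := by
    rw [Finset.prod_ne_zero_iff]
    intro j hj
    exact hja j (by rw [Finset.mem_range] at hj; omega)
  rw [hK', gp, g3, g4]
  field_simp
end
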